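/- Let λ be a Lyndon word with r = |λ|, and let F = run(λ,e,α,β) and F' = run(λ,e',α',β') with e, e' ≥ 2, 0 ≤ α, β, α', β' < r. If e = e' − 1, then F is a unique substring of F' (|Occ(F,F')| = 1) if and only if exactly one of the two inequalities α > α' and β > β' holds. Moreover, if both α > α' and β > β' hold, then F is not a substring of F' (|Occ(F,F')| = 0). -/

import Mathlib

/-- `e`-fold concatenation of the string `l` with itself. -/
def listPow {α : Type*} (l : List α) : ℕ → List α
  | 0 => []
  | n + 1 => l ++ listPow l n

/-- `run λ e α β = P · λ^e · T` where `P` is the suffix of `λ` of length `α`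
and `T` is the prefix of `λ` of length `β`. -/
def runWord {α : Type*} (lam : List α) (e a b : ℕ) : List α :=
  lam.drop (lam.length - a) ++ listPow lam e ++ lam.take b

/-- The set of occurrences of `F` in `F'`: positions `i` with
`0 ≤ i ≤ |F'| − |F|` and `F = F'[i..i+|F|)`. -/
def occ {α : Type*} [DecidableEq α] (F F' : List α) : Finset ℕ :=
  (Finset.range (F'.length + 1)).filter
    (fun i => i + F.length ≤ F'.length ∧ (F'.drop i).take F.length = F)

/-- A Lyndon word: a nonempty string lexicographically strictly smaller than
every proper nonempty suffix of itself. -/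
def IsLyndon {α : Type*} [LinearOrder α] (l : List α) : Prop :=
  l ≠ [] ∧ ∀ i, 0 < i → i < l.length → l < l.drop i

section Aux
variable {α : Type*}

lemma listPow_length (l : List α) (n : ℕ) : (listPow l n).length = n * l.length := by
  induction n with
  | zero => simp [listPow]
  | succ n ih => simp [listPow, ih]; ring

lemma listPow_getElem? (l : List α) (n k : ℕ) (hk : k < n * l.length) :
    (listPow l n)[k]? = l[k % l.length]? := by
  induction n generalizing k with
  | zero => simp at hk
  | succ n ih =>
    rw [listPow]
    by_cases h : k < l.length
    · rw [List.getElem?_append_left h, Nat.mod_eq_of_lt h]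
    · push_neg at h
      rw [List.getElem?_append_right h, ih]
      · congr 1
        conv_rhs => rw [← Nat.sub_add_cancel h, Nat.add_mod_right]
      · rw [Nat.succ_mul] at hk; omega

lemma runWord_length (lam : List α) (e a b : ℕ) (ha : a ≤ lam.length) (hb : b ≤ lam.length) :
    (runWord lam e a b).length = a + e * lam.length + b := by
  simp [runWord, listPow_length, List.length_take, Nat.min_eq_left hb]
  omega

lemma runWord_getElem? (lam : List α) (e a b j : ℕ) (ha : a ≤ lam.length) (hb : b ≤ lam.length)
    (hj : j < a + e * lam.length + b) :
    (runWord lam e a b)[j]? = lam[(j + (lam.length - a)) % lam.length]? := by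
  have hr0 : 0 < lam.length := by
    rcases Nat.eq_zero_or_pos lam.length with h | h
    · have h2 : e * lam.length = 0 := by rw [h, Nat.mul_zero]
      omega
    · exact h
  unfold runWord
  set r := lam.length with hrdef
  rw [List.append_assoc]
  have hlen1 : (lam.drop (r - a)).length = a := by
    rw [List.length_drop]; omega
  by_cases h1 : j < a
  · rw [List.getElem?_append_left (by omega : j < (lam.drop (r - a)).length),
      List.getElem?_drop]
    congr 1
    rw [Nat.mod_eq_of_lt (by omega)]
    omega
  · push_neg at h1
    rw [List.getElem?_append_right (by omega : (lam.drop (r - a)).length ≤ j), hlen1]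
    by_cases h2 : j - a < e * r
    · rw [List.getElem?_append_left (by rw [listPow_length]; exact h2),
        listPow_getElem? _ _ _ h2]
      congr 1
      have : j + (r - a) = (j - a) + r := by omega
      rw [this, Nat.add_mod_right]
    · push_neg at h2
      rw [List.getElem?_append_right (by rw [listPow_length]; exact h2), listPow_length]
      have h3 : j - a - e * r < b := by omega
      rw [List.getElem?_take_of_lt h3]
      congr 1
      have : j + (r - a) = (j - a - e * r) + (e + 1) * r := by
        have : (e + 1) * r = e * r + r := by ring
        omega
      rw [this, Nat.add_mul_mod_self_right, Nat.mod_eq_of_lt (by omega)]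

lemma mem_occ_iff [DecidableEq α] (F F' : List α) (i : ℕ) :
    i ∈ occ F F' ↔ i + F.length ≤ F'.length ∧ ∀ j < F.length, F'[i + j]? = F[j]? := by
  unfold occ
  rw [Finset.mem_filter, Finset.mem_range]
  constructor
  · rintro ⟨hi, hle, heq⟩
    refine ⟨hle, fun j hj => ?_⟩
    conv_rhs => rw [← heq]
    rw [List.getElem?_take_of_lt hj, List.getElem?_drop]
  · rintro ⟨hle, h⟩
    refine ⟨by omega, hle, ?_⟩
    apply List.ext_getElem?
    intro n
    by_cases hn : n < F.length
    · rw [List.getElem?_take_of_lt hn, List.getElem?_drop, h n hn]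
    · rw [List.getElem?_eq_none (l := F) (by omega),
        List.getElem?_eq_none]
      rw [List.length_take, List.length_drop]
      omega

lemma not_lt_of_prefix [LinearOrder α] {l m : List α} (h : l <+: m) : ¬ m < l := by
  intro hlt
  replace hlt : List.Lex (· < ·) m l := hlt
  induction l generalizing m with
  | nil => cases hlt
  | cons x l ih =>
    obtain ⟨t, rfl⟩ := h
    cases hlt with
    | cons h' => exact ih ⟨t, rfl⟩ h'
    | rel h' => exact lt_irrefl _ h'

lemma lyndon_shift_le [LinearOrder α] (lam : List α) (hlyn : IsLyndon lam) (s t : ℕ)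
    (hs : s < lam.length) (ht : t < lam.length) (hst : s ≤ t)
    (h : ∀ j < 2 * lam.length, lam[(j + s) % lam.length]? = lam[(j + t) % lam.length]?) :
    s = t := by
  set r := lam.length with hrdef
  have hr0 : 0 < r := by omega
  by_contra hne
  set d := t - s with hddef
  have hd0 : 0 < d := by omega
  have hdr : d < r := by omega
  have stepA : ∀ k, lam[k % r]? = lam[(k + d) % r]? := by
    intro k
    have hm : (k + (r - s)) % r < r := Nat.mod_lt _ hr0
    have h2 := h ((k + (r - s)) % r + r) (by omega)
    calc lam[k % r]? = lam[((k + (r - s)) % r + r + s) % r]? := by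
          congr 1
          rw [Nat.add_assoc, Nat.mod_add_mod]
          have : k + (r - s) + (r + s) = k + 2 * r := by omega
          rw [this, Nat.add_mul_mod_self_right]
      _ = lam[((k + (r - s)) % r + r + t) % r]? := h2
      _ = lam[(k + d) % r]? := by
          congr 1
          rw [Nat.add_assoc, Nat.mod_add_mod]
          have : k + (r - s) + (r + t) = (k + d) + 2 * r := by omega
          rw [this, Nat.add_mul_mod_self_right]
  have stepB : lam.drop d = lam.take (r - d) := by
    apply List.ext_getElem?
    intro n
    by_cases hn : n < r - d
    · rw [List.getElem?_drop, List.getElem?_take_of_lt hn]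
      have := stepA n
      rw [Nat.mod_eq_of_lt (by omega), Nat.mod_eq_of_lt (by omega)] at this
      rw [Nat.add_comm d n, ← this]
    · rw [List.getElem?_eq_none (by rw [List.length_drop]; omega),
        List.getElem?_eq_none (by rw [List.length_take]; omega)]
  have hlt := hlyn.2 d hd0 (by omega)
  rw [stepB] at hlt
  exact not_lt_of_prefix (List.take_prefix _ _) hlt

lemma lyndon_shift [LinearOrder α] (lam : List α) (hlyn : IsLyndon lam) (s t : ℕ)
    (hs : s < lam.length) (ht : t < lam.length)
    (h : ∀ j < 2 * lam.length, lam[(j + s) % lam.length]? = lam[(j + t) % lam.length]?) :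
    s = t := by
  rcases le_total s t with hst | hst
  · exact lyndon_shift_le lam hlyn s t hs ht hst h
  · exact (lyndon_shift_le lam hlyn t s ht hs hst (fun j hj => (h j hj).symm)).symm

end Aux

theorem run_substring_case_sub1 {α : Type*} [LinearOrder α]
    (lam : List α) (hlyn : IsLyndon lam) (r : ℕ) (hr : r = lam.length)
    (e e' a b a' b' : ℕ) (he : 2 ≤ e) (he' : 2 ≤ e')
    (ha : a < r) (hb : b < r) (ha' : a' < r) (hb' : b' < r)
    (hcase : e + 1 = e') :
    ((occ (runWord lam e a b) (runWord lam e' a' b')).card = 1 ↔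
      Xor' (a' < a) (b' < b)) ∧
    (a' < a → b' < b →
      (occ (runWord lam e a b) (runWord lam e' a' b')).card = 0) := by
  subst hcase
  subst hr
  have hr0 : 0 < lam.length := List.length_pos_iff.mpr hlyn.1
  have hmul : (e + 1) * lam.length = e * lam.length + lam.length := by ring
  have hFlen : (runWord lam e a b).length = a + e * lam.length + b :=
    runWord_length lam e a b (by omega) (by omega)
  have hF'len : (runWord lam (e + 1) a' b').length = a' + (e + 1) * lam.length + b' :=
    runWord_length lam (e + 1) a' b' (by omega) (by omega)
  have harg : ∀ x y : ℕ, x = y → lam[x % lam.length]? = lam[y % lam.length]? :=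
    fun x y h => by rw [h]
  -- characterization of occurrences
  have hchar : ∀ i, i ∈ occ (runWord lam e a b) (runWord lam (e + 1) a' b') ↔
      (i % lam.length = (lam.length + a' - a) % lam.length ∧
       i + (a + e * lam.length + b) ≤ a' + (e + 1) * lam.length + b') := by
    intro i
    rw [mem_occ_iff, hFlen, hF'len]
    constructor
    · rintro ⟨hle, hpt⟩
      refine ⟨?_, hle⟩
      have h2r : 2 * lam.length ≤ a + e * lam.length + b := by
        have : 2 * lam.length ≤ e * lam.length := Nat.mul_le_mul_right _ he
        omega
      have hkey : (i + (lam.length - a')) % lam.length = (lam.length - a) % lam.length := by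
        apply lyndon_shift lam hlyn _ _ (Nat.mod_lt _ hr0) (Nat.mod_lt _ hr0)
        intro j hj
        have hj' : j < a + e * lam.length + b := by omega
        have h1 := hpt j hj'
        rw [runWord_getElem? lam (e + 1) a' b' (i + j) (by omega) (by omega) (by omega),
            runWord_getElem? lam e a b j (by omega) (by omega) hj'] at h1
        calc lam[(j + (i + (lam.length - a')) % lam.length) % lam.length]?
            = lam[(i + j + (lam.length - a')) % lam.length]? := by
              rw [Nat.add_mod_mod]; exact harg _ _ (by omega)
          _ = lam[(j + (lam.length - a)) % lam.length]? := h1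
          _ = lam[(j + (lam.length - a) % lam.length) % lam.length]? := by
              rw [Nat.add_mod_mod]
      have h3 : Nat.ModEq lam.length (i + (lam.length - a')) (lam.length - a) := hkey
      have h4 := h3.add_right a'
      have e1 : i + (lam.length - a') + a' = i + lam.length := by omega
      have e2 : (lam.length - a) + a' = lam.length + a' - a := by omega
      rw [e1, e2] at h4
      calc i % lam.length = (i + lam.length) % lam.length := (Nat.add_mod_right i _).symm
        _ = (lam.length + a' - a) % lam.length := h4
    · rintro ⟨hmod, hle⟩
      refine ⟨hle, fun j hj => ?_⟩
      rw [runWord_getElem? lam (e + 1) a' b' (i + j) (by omega) (by omega) (by omega),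
          runWord_getElem? lam e a b j (by omega) (by omega) hj]
      have c1 : Nat.ModEq lam.length (i % lam.length + (lam.length - a'))
          (i + (lam.length - a')) := (Nat.mod_modEq i lam.length).add_right _
      rw [hmod] at c1
      have c2 : Nat.ModEq lam.length
          ((lam.length + a' - a) % lam.length + (lam.length - a'))
          ((lam.length + a' - a) + (lam.length - a')) :=
        (Nat.mod_modEq _ _).add_right _
      have c3 := c2.symm.trans c1
      have e3 : (lam.length + a' - a) + (lam.length - a')
          = (lam.length - a) + lam.length := by omega
      rw [e3] at c3
      have c4 : Nat.ModEq lam.length (lam.length - a) (i + (lam.length - a')) :=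
        Nat.ModEq.trans (Nat.add_mod_right (lam.length - a) lam.length).symm c3
      have c5 := c4.add_left j
      have e4 : j + (i + (lam.length - a')) = i + j + (lam.length - a') := by omega
      rw [e4] at c5
      exact congrArg (fun x => lam[x]?)
        (c5.symm : (i + j + (lam.length - a')) % lam.length
          = (j + (lam.length - a)) % lam.length)
  obtain ⟨m, hmdef⟩ : ∃ m, (lam.length + a' - a) % lam.length = m := ⟨_, rfl⟩
  simp only [hmdef] at hchar
  have hdec : ∀ i, i ∈ occ (runWord lam e a b) (runWord lam (e + 1) a' b') →
      ∃ q ≤ 2, i = lam.length * q + m := by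
    intro i hi
    obtain ⟨hmod, hle⟩ := (hchar i).mp hi
    have hdm := Nat.div_add_mod i lam.length
    rw [hmod] at hdm
    refine ⟨i / lam.length, ?_, by omega⟩
    by_contra hq
    push_neg at hq
    have h5 : 3 * lam.length ≤ (i / lam.length) * lam.length :=
      Nat.mul_le_mul_right _ (by omega)
    have h6 : lam.length * (i / lam.length) = (i / lam.length) * lam.length :=
      Nat.mul_comm _ _
    omega
  have hzero : a' < a → b' < b →
      (occ (runWord lam e a b) (runWord lam (e + 1) a' b')).card = 0 := by
    intro h1 h2
    have hmB : m = lam.length + a' - a := by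
      rw [← hmdef, Nat.mod_eq_of_lt (by omega)]
    rw [Finset.card_eq_zero, Finset.eq_empty_iff_forall_notMem]
    intro i hi
    obtain ⟨q, hq, hqe⟩ := hdec i hi
    obtain ⟨hmod, hle⟩ := (hchar i).mp hi
    interval_cases q <;> omega
  refine ⟨⟨?_, ?_⟩, hzero⟩
  · intro h1
    by_contra hx
    unfold Xor' Xor at hx
    push_neg at hx
    rcases lt_or_ge a' a with haa | haa <;> rcases lt_or_ge b' b with hbb | hbb
    · rw [hzero haa hbb] at h1; omega
    · exact absurd (hx.1 haa) (by omega)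
    · exact absurd (hx.2 hbb) (by omega)
    · have hmA : m = a' - a := by
        rw [← hmdef]
        have h7 : lam.length + a' - a = (a' - a) + lam.length := by omega
        rw [h7, Nat.add_mod_right, Nat.mod_eq_of_lt (by omega)]
      have hm1 : (a' - a) ∈ occ (runWord lam e a b) (runWord lam (e + 1) a' b') :=
        (hchar _).mpr ⟨by rw [Nat.mod_eq_of_lt (by omega)]; omega, by omega⟩
      have hm2 : (a' - a + lam.length) ∈ occ (runWord lam e a b) (runWord lam (e + 1) a' b') :=
        (hchar _).mpr ⟨by rw [Nat.add_mod_right, Nat.mod_eq_of_lt (by omega)]; omega, by omega⟩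
      have h8 := Finset.one_lt_card.mpr ⟨_, hm1, _, hm2, by omega⟩
      omega
  · intro hx
    rw [Finset.card_eq_one]
    rcases hx with ⟨haa, hbb⟩ | ⟨hbb, haa⟩
    · have hmB : m = lam.length + a' - a := by
        rw [← hmdef, Nat.mod_eq_of_lt (by omega)]
      refine ⟨lam.length + a' - a, Finset.eq_singleton_iff_unique_mem.mpr ⟨?_, ?_⟩⟩
      · exact (hchar _).mpr ⟨by rw [Nat.mod_eq_of_lt (by omega)]; omega, by omega⟩
      · intro i hi
        obtain ⟨q, hq, hqe⟩ := hdec i hi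
        obtain ⟨hmod, hle⟩ := (hchar i).mp hi
        interval_cases q <;> omega
    · have hmA : m = a' - a := by
        rw [← hmdef]
        have h7 : lam.length + a' - a = (a' - a) + lam.length := by omega
        rw [h7, Nat.add_mod_right, Nat.mod_eq_of_lt (by omega)]
      refine ⟨a' - a, Finset.eq_singleton_iff_unique_mem.mpr ⟨?_, ?_⟩⟩
      · exact (hchar _).mpr ⟨by rw [Nat.mod_eq_of_lt (by omega)]; omega, by omega⟩
      · intro i hi
        obtain ⟨q, hq, hqe⟩ := hdec i hi
        obtain ⟨hmod, hle⟩ := (hchar i).mp hi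
        interval_cases q <;> omega
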